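/- arXiv:math/0211273 — 2 statements merged into one kernel-verified Lean document; each statement's English description precedes it below -/
import Mathlib

section
/- Let w : Fin (2n) → Bool assign to each point of a cyclic sequence of 2n points a label, such that the points are grouped into n non-crossing pairs (chords) and both points of each pair carry opposite orientations when traversed along a fixed simple closed curve. Then there exist two pairs that are adjacent in the cyclic order and traversed in opposite directions. -/
/-! Take the chord whose right endpoint `b` comes first, and let `a` be its left endpoint.
A point strictly between `a` and `b` cannot be matched further left (its chord would end
before `b`) nor further right (its chord would cross `a b`), so `a` and `b` are adjacent. -/

section Noncrossing

variable {α : Type*} [LinearOrder α] {M : α → α}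

def IsNoncrossing (M : α → α) : Prop :=
  ¬ ∃ a b c d : α, M a = b ∧ M c = d ∧ a < c ∧ c < b ∧ b < d

lemma exists_apply_lt [Nonempty α] (hinv : Function.Involutive M) (hfix : ∀ i, M i ≠ i) :
    ∃ j, M j < j := by
  obtain ⟨i⟩ := ‹Nonempty α›
  rcases (hfix i).lt_or_gt with hlt | hgt
  · exact ⟨i, hlt⟩
  · exact ⟨M i, by rwa [hinv i]⟩

lemma IsNoncrossing.apply_covBy_of_forall_le (hnc : IsNoncrossing M)
    (hinv : Function.Involutive M) (hfix : ∀ i, M i ≠ i) {b : α} (hb : M b < b)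
    (hmin : ∀ j, M j < j → b ≤ j) : M b ⋖ b := by
  refine ⟨hb, fun j haj hjb => ?_⟩
  rcases lt_trichotomy (M j) j with hlt | heq | hgt
  · exact (hmin j hlt).not_gt hjb
  · exact hfix j heq
  · have hbMj : b < M j := by
      refine (hmin (M j) (by rwa [hinv j])).lt_of_ne fun hMj => ?_
      rw [hMj, hinv j] at haj
      exact haj.false
    exact hnc ⟨M b, b, j, M j, hinv b, rfl, haj, hjb, hbMj⟩

lemma IsNoncrossing.exists_apply_covBy [WellFoundedLT α] [Nonempty α]
    (hnc : IsNoncrossing M) (hinv : Function.Involutive M) (hfix : ∀ i, M i ≠ i) :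
    ∃ b, M b ⋖ b := by
  obtain ⟨b, hb, hmin⟩ :=
    wellFounded_lt.has_min {j | M j < j} (exists_apply_lt hinv hfix)
  exact ⟨b, hnc.apply_covBy_of_forall_le hinv hfix hb fun j hj => not_lt.mp (hmin j hj)⟩

end Noncrossing

/-- Signed version of the outermost argument (Lemma 3.5, Figure 4): given a
non-crossing perfect matching of `2n` cyclically ordered points labelled by
`w : Fin (2n) → Bool`, where matched points carry opposite labels (opposite
directions of traversal), there is a matched pair of cyclically adjacent points,
necessarily traversed in opposite directions. -/
theorem stmt_8 (n : ℕ) (hn : 1 ≤ n) (w : Fin (2 * n) → Bool)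
    (M : Fin (2 * n) → Fin (2 * n))
    (hinv : ∀ i, M (M i) = i) (hfix : ∀ i, M i ≠ i)
    (hopp : ∀ i, w (M i) = ! w i)
    (hnc : ¬ ∃ a b c d : Fin (2 * n),
      M a = b ∧ M c = d ∧ a < c ∧ c < b ∧ b < d) :
    ∃ i : Fin (2 * n), ((M i : ℕ) = ((i : ℕ) + 1) % (2 * n)) ∧ w (M i) = ! w i := by
  have : Nonempty (Fin (2 * n)) := ⟨⟨0, by omega⟩⟩
  obtain ⟨b, hcov⟩ := IsNoncrossing.exists_apply_covBy hnc hinv hfix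
  have hsucc : (M b : ℕ) + 1 = b := Nat.covBy_iff_add_one_eq.mp (Fin.covBy_iff.mp hcov)
  refine ⟨M b, ?_, hopp (M b)⟩
  rw [hinv b, hsucc, Nat.mod_eq_of_lt b.is_lt]
end

section
/- Let T be a finite tree, let C ⊆ T be a subtree, and let R be a connected component of T \ C whose root (the unique vertex of R adjacent to C) lies at distance at most c from C. If R' is the maximal-volume component of R minus the (c+d)-neighborhood N of C (intersected with R), then R' is a full connected component of T \ N. -/
/-- `S` is (the vertex set of) a connected component of the subgraph of `G`
induced on `A`. -/
def IsCompOf {V : Type*} (G : SimpleGraph V) (A S : Set V) : Prop :=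
  ∃ c : (G.induce A).ConnectedComponent, S = Subtype.val '' c.supp

/-- A component is closed under adjacency inside the ambient set. -/
lemma IsCompOf.adj_mem {V : Type*} {G : SimpleGraph V} {A S : Set V}
    (h : IsCompOf G A S) {a b : V} (ha : a ∈ S) (hb : b ∈ A) (hab : G.Adj a b) :
    b ∈ S := by
  obtain ⟨cc, rfl⟩ := h
  obtain ⟨a', ha', rfl⟩ := ha
  refine ⟨⟨b, hb⟩, ?_, rfl⟩
  rw [SimpleGraph.ConnectedComponent.mem_supp_iff] at ha' ⊢
  rw [← ha']
  exact SimpleGraph.ConnectedComponent.sound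
    (SimpleGraph.Adj.reachable (by exact hab.symm : (G.induce A).Adj ⟨b, hb⟩ a'))

/-- Disk pushing, step (I), the "crucial fact": let `T` be a finite tree, `C` a
subtree, `R` a component of `T \ C` whose root `ρ` (the unique vertex of `R`
adjacent to `C`) lies at distance at most `c` from `C`, and let `N` be the
`(c+d)`-neighborhood of `C`.  If `R'` is a maximal-volume component of `R \ N`,
then `R'` is a full connected component of `T \ N`. -/
theorem stmt_12 {V : Type*} [Fintype V] (G : SimpleGraph V) (hT : G.IsTree)
    (c d : ℕ) (C : Set V) (hCne : C.Nonempty) (hCconn : (G.induce C).Connected)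
    (R : Set V) (hR : IsCompOf G Cᶜ R)
    (ρ : V) (hρR : ρ ∈ R) (hρadj : ∃ u ∈ C, G.Adj ρ u)
    (hρuniq : ∀ x ∈ R, (∃ u ∈ C, G.Adj x u) → x = ρ)
    (hρdist : ∃ u ∈ C, G.dist ρ u ≤ c)
    (N : Set V) (hN : N = {v : V | ∃ u ∈ C, G.dist v u ≤ c + d})
    (R' : Set V) (hR' : IsCompOf G (R \ N) R')
    (hmax : ∀ S : Set V, IsCompOf G (R \ N) S → S.ncard ≤ R'.ncard) :
    IsCompOf G Nᶜ R' := by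
  have hCN : C ⊆ N := by
    intro v hv
    rw [hN]
    refine ⟨v, hv, ?_⟩
    rw [SimpleGraph.dist_self]
    exact Nat.zero_le _
  obtain ⟨c1, hc1⟩ := hR'
  have hR'c : IsCompOf G (R \ N) R' := ⟨c1, hc1⟩
  have hsub : R' ⊆ R \ N := by
    intro y hy
    rw [hc1] at hy
    obtain ⟨y', _, rfl⟩ := hy
    exact y'.2
  -- closure of R' under adjacency in Nᶜ
  have hclos : ∀ a ∈ R', ∀ b ∈ Nᶜ, G.Adj a b → b ∈ R' := by
    intro a ha b hb hab
    have haR : a ∈ R \ N := hsub ha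
    have hbC : b ∈ Cᶜ := fun h => hb (hCN h)
    have hbR : b ∈ R := hR.adj_mem haR.1 hbC hab
    exact hR'c.adj_mem ha ⟨hbR, hb⟩ hab
  obtain ⟨v, hv⟩ := c1.exists_rep
  have hvR' : (v : V) ∈ R' := by
    rw [hc1]
    exact ⟨v, by rw [SimpleGraph.ConnectedComponent.mem_supp_iff]; exact hv, rfl⟩
  have hvN : (v : V) ∈ Nᶜ := fun h => v.2.2 h
  refine ⟨(G.induce Nᶜ).connectedComponentMk ⟨(v : V), hvN⟩, ?_⟩
  ext y
  constructor
  · intro hy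
    have hyRN : y ∈ R \ N := hsub hy
    obtain ⟨y', hy', hyeq⟩ := hc1 ▸ hy
    -- y' reachable from v in induce (R \ N)
    have hreach : (G.induce (R \ N)).Reachable v y' := by
      rw [SimpleGraph.ConnectedComponent.mem_supp_iff] at hy'
      exact ((SimpleGraph.ConnectedComponent.eq).mp (hy'.trans hv.symm)).symm
    let hom : G.induce (R \ N) →g G.induce Nᶜ :=
      ⟨fun x => ⟨x.1, fun h => x.2.2 h⟩, fun h => h⟩
    have := hreach.map hom
    refine ⟨⟨y, fun h => hyRN.2 h⟩, ?_, rfl⟩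
    rw [SimpleGraph.ConnectedComponent.mem_supp_iff]
    refine SimpleGraph.ConnectedComponent.sound ?_
    have h2 : hom v = ⟨(v : V), hvN⟩ := rfl
    have h3 : hom y' = ⟨y, fun h => hyRN.2 h⟩ := Subtype.ext hyeq
    rw [h2, h3] at this
    exact this.symm
  · rintro ⟨y', hy', rfl⟩
    rw [SimpleGraph.ConnectedComponent.mem_supp_iff] at hy'
    have hreach : (G.induce Nᶜ).Reachable ⟨(v : V), hvN⟩ y' :=
      ((SimpleGraph.ConnectedComponent.eq).mp hy').symm
    obtain ⟨w⟩ := hreach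
    have key : ∀ (a b : ↥(Nᶜ : Set V)) (w : (G.induce Nᶜ).Walk a b),
        (a : V) ∈ R' → (b : V) ∈ R' := by
      intro a b w
      induction w with
      | nil => exact id
      | cons h p ih =>
        intro ha
        exact ih (hclos _ ha _ (Subtype.prop _) h)
    exact key _ _ w hvR'
end
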